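/- arXiv:1701.00388 — 2 statements merged into one kernel-verified Lean document; each statement's English description precedes it below -/
import Mathlib

section
/- For every positive integer $k$, $\sum_{n=1}^{\infty} \frac{H_n^2}{n(n+k)} = \frac{1}{k}\left\{ 3\zeta(3) + \frac{H_k^3 + 3H_k\zeta_k(2) + 2\zeta_k(3)}{3} - \frac{H_k^2 + \zeta_k(2)}{k} - \sum_{i=1}^{k-1} \frac{H_i}{i^2} + \zeta(2) H_{k-1} \right\}$. -/
noncomputable def H (n : ℕ) : ℝ := ∑ j ∈ Finset.Icc 1 n, (1 : ℝ) / j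

noncomputable def zh (m n : ℕ) : ℝ := ∑ j ∈ Finset.Icc 1 n, (1 : ℝ) / (j : ℝ) ^ m

noncomputable def Z (s : ℕ) : ℝ := ∑' n : ℕ, 1 / ((n : ℝ) + 1) ^ s

/-
Since `k / (x (x + k)) = ∑_{t<k} (1/(x + t) - 1/(x + t + 1))`, summation by parts turns
`k ∑ f(n) / (n (n + k))`, for a nonnegative sequence `f` with `f 0 = 0` and `f n = o(n)`, into
`∑_{t<k} ∑_n (f(n) - f(n-1)) / (n + t)`. For `f = H²` the increments are `2 H_n/n - 1/n²`, so the
inner series are `∑ H_n/(n (n + t))`, evaluated by the same device with `f = H`, and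
`∑ 1/(n² (n + t))`, evaluated by partial fractions; for `t = 0` the first one is Euler's
`∑ H_n/n² = 2 ζ(3)`. The finite sums that remain collapse by induction on `k`.
-/

open Finset Filter Topology

lemma H_zero : H 0 = 0 := by simp [H]

lemma H_succ (n : ℕ) : H (n + 1) = H n + 1 / ((n : ℝ) + 1) := by
  rw [H, H, sum_Icc_succ_top (by omega)]
  push_cast
  ring

lemma H_eq_sum_range (n : ℕ) : H n = ∑ i ∈ range n, 1 / ((i : ℝ) + 1) := by
  induction n with
  | zero => simp [H_zero]
  | succ n ih => rw [H_succ, sum_range_succ, ih]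

lemma H_nonneg (n : ℕ) : 0 ≤ H n := by
  rw [H_eq_sum_range]
  positivity

lemma zh_zero (m : ℕ) : zh m 0 = 0 := by simp [zh]

lemma zh_succ (m n : ℕ) : zh m (n + 1) = zh m n + 1 / ((n : ℝ) + 1) ^ m := by
  rw [zh, zh, sum_Icc_succ_top (by omega)]
  push_cast
  ring

lemma H_eq_harmonic (n : ℕ) : H n = harmonic n := by
  simp [H, harmonic_eq_sum_Icc]

lemma H_le_rpow (n : ℕ) : H n ≤ 5 * (n : ℝ) ^ (1 / 4 : ℝ) := by
  rcases Nat.eq_zero_or_pos n with rfl | hn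
  · simp [H_zero]
  have hlog := Real.log_le_rpow_div n.cast_nonneg (by norm_num : (0 : ℝ) < 1 / 4)
  have hone : 1 ≤ (n : ℝ) ^ (1 / 4 : ℝ) :=
    Real.one_le_rpow (by exact_mod_cast hn) (by norm_num)
  have := harmonic_le_one_add_log n
  rw [H_eq_harmonic]
  linarith

lemma H_sq_le_rpow (n : ℕ) : H n ^ 2 ≤ 25 * (n : ℝ) ^ (1 / 2 : ℝ) := by
  have hsq : ((n : ℝ) ^ (1 / 4 : ℝ)) ^ 2 = (n : ℝ) ^ (1 / 2 : ℝ) := by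
    rw [← Real.rpow_natCast, ← Real.rpow_mul n.cast_nonneg]
    norm_num
  calc H n ^ 2 ≤ (5 * (n : ℝ) ^ (1 / 4 : ℝ)) ^ 2 := pow_le_pow_left₀ (H_nonneg n) (H_le_rpow n) 2
    _ = 25 * (n : ℝ) ^ (1 / 2 : ℝ) := by rw [mul_pow, hsq]; norm_num

lemma tendsto_div_natCast_of_le_rpow {f : ℕ → ℝ} {C α : ℝ} (hα : α < 1)
    (h0 : ∀ n, 0 ≤ f n) (hf : ∀ n, f n ≤ C * (n : ℝ) ^ α) :
    Tendsto (fun n : ℕ => f n / n) atTop (𝓝 0) := by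
  have hlim : Tendsto (fun n : ℕ => C * (n : ℝ) ^ (α - 1)) atTop (𝓝 0) := by
    simpa using ((tendsto_rpow_neg_atTop (by linarith : 0 < 1 - α)).comp
      tendsto_natCast_atTop_atTop).const_mul C
  refine squeeze_zero' (Eventually.of_forall fun n => div_nonneg (h0 n) n.cast_nonneg) ?_ hlim
  filter_upwards [eventually_ge_atTop 1] with n hn
  have hn' : (0 : ℝ) < n := by exact_mod_cast hn
  rw [Real.rpow_sub_one hn'.ne', ← mul_div_assoc]
  exact div_le_div_of_nonneg_right (hf n) hn'.le

lemma summable_H_succ_div_sq : Summable fun n : ℕ => H (n + 1) / ((n : ℝ) + 1) ^ 2 := by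
  have hs : Summable fun n : ℕ => 5 * ((n : ℝ) + 1) ^ (-(7 / 4) : ℝ) := by
    have := (summable_nat_add_iff 1).2 (Real.summable_nat_rpow.2 (by norm_num : -(7 / 4 : ℝ) < -1))
    exact (this.congr fun n => by push_cast; rfl).mul_left 5
  refine hs.of_nonneg_of_le (fun n => div_nonneg (H_nonneg _) (by positivity)) fun n => ?_
  have hpos : (0 : ℝ) < n + 1 := by positivity
  rw [div_le_iff₀ (by positivity)]
  calc H (n + 1) ≤ 5 * ((n : ℝ) + 1) ^ (1 / 4 : ℝ) := by exact_mod_cast H_le_rpow (n + 1)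
    _ = 5 * ((n : ℝ) + 1) ^ (-(7 / 4) : ℝ) * ((n : ℝ) + 1) ^ 2 := by
      rw [mul_assoc, ← Real.rpow_natCast, ← Real.rpow_add hpos]
      norm_num

section Abel

variable {f g : ℕ → ℝ}

lemma sum_range_mul_sub_by_parts (N : ℕ) :
    ∑ n ∈ range N, f (n + 1) * (g n - g (n + 1)) =
      ∑ n ∈ range N, (f (n + 1) - f n) * g n + f 0 * g 0 - f N * g N := by
  induction N with
  | zero => simp
  | succ N ih =>
    rw [sum_range_succ, sum_range_succ, ih]
    ring

lemma hasSum_mul_sub_by_parts (hf0 : f 0 = 0) (hf : ∀ n, 0 ≤ f n) (hg : Antitone g)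
    (hlim : Tendsto (fun N => f N * g N) atTop (𝓝 0))
    (hs : Summable fun n => (f (n + 1) - f n) * g n) :
    HasSum (fun n => f (n + 1) * (g n - g (n + 1))) (∑' n, (f (n + 1) - f n) * g n) := by
  rw [hasSum_iff_tendsto_nat_of_nonneg fun n => mul_nonneg (hf _) (sub_nonneg.2 (hg n.le_succ))]
  simp only [sum_range_mul_sub_by_parts, hf0, zero_mul, add_zero]
  simpa using hs.hasSum.tendsto_sum_nat.sub hlim

theorem hasSum_div_mul_add (hf0 : f 0 = 0) (hf : ∀ n, 0 ≤ f n)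
    (hlim : Tendsto (fun N : ℕ => f N / N) atTop (𝓝 0))
    (hs : ∀ t : ℕ, Summable fun n : ℕ => (f (n + 1) - f n) / ((n : ℝ) + 1 + t))
    {k : ℕ} (hk : 0 < k) :
    HasSum (fun n : ℕ => f (n + 1) / (((n : ℝ) + 1) * ((n : ℝ) + 1 + k)))
      ((∑ t ∈ range k, ∑' n : ℕ, (f (n + 1) - f n) / ((n : ℝ) + 1 + t)) / k) := by
  have habel (t : ℕ) : HasSum
      (fun n : ℕ => f (n + 1) * (((n : ℝ) + 1 + t)⁻¹ - (((n + 1 : ℕ) : ℝ) + 1 + t)⁻¹))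
      (∑' n : ℕ, (f (n + 1) - f n) / ((n : ℝ) + 1 + t)) := by
    simp only [div_eq_mul_inv] at hs ⊢
    refine hasSum_mul_sub_by_parts hf0 hf (fun a b hab => ?_) ?_ (hs t)
    · gcongr
    · refine squeeze_zero' (Eventually.of_forall fun N => mul_nonneg (hf N) (by positivity))
        ?_ (by simpa only [div_eq_mul_inv] using hlim)
      filter_upwards [eventually_ge_atTop 1] with N hN
      have hN' : (0 : ℝ) < N := by exact_mod_cast hN
      gcongr
      · exact hf N
      · linarith
  have hk' : (k : ℝ) ≠ 0 := by positivity
  have hterm (n : ℕ) : f (n + 1) / (((n : ℝ) + 1) * ((n : ℝ) + 1 + k)) =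
      (∑ t ∈ range k, f (n + 1) * (((n : ℝ) + 1 + t)⁻¹ - (((n + 1 : ℕ) : ℝ) + 1 + t)⁻¹)) / k := by
    have htel : ∑ t ∈ range k, (((n : ℝ) + 1 + t)⁻¹ - (((n + 1 : ℕ) : ℝ) + 1 + t)⁻¹) =
        ((n : ℝ) + 1)⁻¹ - ((n : ℝ) + 1 + k)⁻¹ := by
      have h := sum_range_sub' (fun t : ℕ => ((n : ℝ) + 1 + t)⁻¹) k
      rw [Nat.cast_zero, add_zero] at h
      rw [← h]
      refine sum_congr rfl fun t _ => ?_
      push_cast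
      ring_nf
    rw [← mul_sum, htel]
    field_simp
    ring
  simpa only [hterm] using (hasSum_sum fun t _ => habel t).div_const (k : ℝ)

end Abel

lemma hasSum_Z {s : ℕ} (hs : 2 ≤ s) : HasSum (fun n : ℕ => 1 / ((n : ℝ) + 1) ^ s) (Z s) := by
  have h := (summable_nat_add_iff 1).2 (Real.summable_one_div_nat_pow.2 hs)
  exact (h.congr fun n => by push_cast; rfl).hasSum

lemma hasSum_one_div_mul_add {k : ℕ} (hk : 0 < k) :
    HasSum (fun n : ℕ => 1 / (((n : ℝ) + 1) * ((n : ℝ) + 1 + k))) (H k / k) := by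
  -- summation by parts against the indicator of `n ≠ 0` is plain telescoping
  let f : ℕ → ℝ := fun n => if n = 0 then 0 else 1
  have hf (n : ℕ) : 0 ≤ f n := by unfold f; split_ifs <;> norm_num
  have hΔ (n t : ℕ) : (f (n + 1) - f n) / ((n : ℝ) + 1 + t) =
      if n = 0 then 1 / ((t : ℝ) + 1) else 0 := by
    rcases n with _ | n <;> simp [f, add_comm]
  have h := hasSum_div_mul_add (f := f) (by simp [f]) hf
    (tendsto_div_natCast_of_le_rpow (C := 1) zero_lt_one hf fun n => by
      unfold f; split_ifs <;> simp)
    (fun t => by simpa only [hΔ] using (hasSum_ite_eq 0 _).summable)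
    hk
  simp only [hΔ, tsum_ite_eq, ← H_eq_sum_range] at h
  simpa [f] using h

lemma tsum_prod_eq_tsum_sum_antidiagonal {f : ℕ × ℕ → ℝ} (hf : Summable f) :
    ∑' p, f p = ∑' n, ∑ p ∈ antidiagonal n, f p := by
  have hs : Summable fun c => f (HasAntidiagonal.sigmaAntidiagonalEquivProd c) :=
    (Equiv.summable_iff _).2 hf
  rw [← HasAntidiagonal.sigmaAntidiagonalEquivProd.tsum_eq,
    hs.tsum_sigma' fun n => (hasSum_fintype _).summable]
  exact tsum_congr fun n => tsum_subtype (antidiagonal n) f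

lemma hasSum_one_div_mul_mul_add (j : ℕ) :
    HasSum (fun m : ℕ => 1 / (((j : ℝ) + 1) * ((m : ℝ) + 1) * ((j : ℝ) + m + 2)))
      (H (j + 1) / ((j : ℝ) + 1) ^ 2) := by
  have h := (hasSum_one_div_mul_add j.succ_pos).mul_left (1 / ((j : ℝ) + 1))
  rw [show H (j + 1) / ((j : ℝ) + 1) ^ 2 = 1 / ((j : ℝ) + 1) * (H (j + 1) / ((j + 1 : ℕ) : ℝ)) by
    push_cast; field_simp]
  refine h.congr_fun fun m => ?_
  push_cast
  field_simp
  ring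

lemma sum_antidiagonal_one_div_mul_sq (s : ℕ) :
    ∑ p ∈ antidiagonal s, 1 / (((p.1 : ℝ) + 1) * (((p.1 + p.2 : ℕ) : ℝ) + 2) ^ 2) =
      H (s + 1) / ((s : ℝ) + 2) ^ 2 := by
  rw [sum_congr rfl fun p hp => by rw [mem_antidiagonal.1 hp],
    Nat.sum_antidiagonal_eq_sum_range_succ_mk, H_eq_sum_range, sum_div]
  refine sum_congr rfl fun i _ => ?_
  field_simp

lemma tsum_H_succ_div_add_two_sq :
    ∑' s : ℕ, H (s + 1) / ((s : ℝ) + 2) ^ 2 = ∑' n : ℕ, H (n + 1) / ((n : ℝ) + 1) ^ 2 - Z 3 := by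
  have h := summable_H_succ_div_sq.hasSum.sub (hasSum_Z (by norm_num : 2 ≤ 3))
  rw [← h.tsum_eq, h.summable.tsum_eq_zero_add, H_succ 0, H_zero]
  norm_num only [zero_add]
  refine tsum_congr fun s => ?_
  rw [H_succ (s + 1)]
  push_cast
  field_simp
  ring

theorem hasSum_H_succ_div_sq :
    HasSum (fun n : ℕ => H (n + 1) / ((n : ℝ) + 1) ^ 2) (2 * Z 3) := by
  set D := ∑' n : ℕ, H (n + 1) / ((n : ℝ) + 1) ^ 2
  set P : ℕ × ℕ → ℝ := fun p => 1 / (((p.1 : ℝ) + 1) * ((p.2 : ℝ) + 1) * ((p.1 : ℝ) + p.2 + 2))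
  set G : ℕ × ℕ → ℝ := fun p => 1 / (((p.1 : ℝ) + 1) * (((p.1 + p.2 : ℕ) : ℝ) + 2) ^ 2)
  -- `∑ P` is `D` summed by rows and, as `P = G + G ∘ swap`, `2 (D - ζ(3))` along antidiagonals
  have hG0 : 0 ≤ G := fun p => by positivity
  have hPG (p : ℕ × ℕ) : P p = G p + G p.swap := by
    simp only [P, G, Prod.fst_swap, Prod.snd_swap]
    push_cast
    field_simp
    ring
  have hP : Summable P := (summable_prod_of_nonneg fun p => by positivity).2
    ⟨fun j => (hasSum_one_div_mul_mul_add j).summable,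
      summable_H_succ_div_sq.congr fun j => (hasSum_one_div_mul_mul_add j).tsum_eq.symm⟩
  have hG : Summable G := hP.of_nonneg_of_le hG0 fun p => by
    rw [hPG]
    exact le_add_of_nonneg_right (hG0 p.swap)
  have hPD : ∑' p, P p = D := by
    rw [hP.tsum_prod]
    exact tsum_congr fun j => (hasSum_one_div_mul_mul_add j).tsum_eq
  have hGD : ∑' p, G p = D - Z 3 := by
    rw [tsum_prod_eq_tsum_sum_antidiagonal hG, ← tsum_H_succ_div_add_two_sq]
    exact tsum_congr sum_antidiagonal_one_div_mul_sq
  have hGswap : ∑' p : ℕ × ℕ, G p.swap = ∑' p, G p := (Equiv.prodComm ℕ ℕ).tsum_eq G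
  have hD : D = 2 * (D - Z 3) := calc
    D = ∑' p, P p := hPD.symm
    _ = ∑' p, G p + ∑' p : ℕ × ℕ, G p.swap :=
      (tsum_congr hPG).trans (hG.tsum_add ((Equiv.prodComm ℕ ℕ).summable_iff.2 hG))
    _ = 2 * (D - Z 3) := by rw [hGswap, hGD]; ring
  rw [show 2 * Z 3 = D by linarith]
  exact summable_H_succ_div_sq.hasSum

lemma sum_range_H_succ_div (u : ℕ) :
    ∑ t ∈ range u, H (t + 1) / ((t + 1 : ℕ) : ℝ) = (H u ^ 2 + zh 2 u) / 2 := by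
  induction u with
  | zero => simp [H_zero, zh_zero]
  | succ u ih =>
    rw [sum_range_succ, ih, H_succ, zh_succ]
    push_cast
    field_simp
    ring

lemma H_succ_sub_div (n t : ℕ) :
    (H (n + 1) - H n) / ((n : ℝ) + 1 + t) = 1 / (((n : ℝ) + 1) * ((n : ℝ) + 1 + t)) := by
  rw [H_succ, add_sub_cancel_left, div_div]

lemma hasSum_H_succ_div_mul_add (u : ℕ) :
    HasSum (fun n : ℕ => H (n + 1) / (((n : ℝ) + 1) * ((n : ℝ) + 1 + (u + 1 : ℕ))))
      ((Z 2 + (H u ^ 2 + zh 2 u) / 2) / ((u : ℝ) + 1)) := by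
  have hE0 : HasSum (fun n : ℕ => (H (n + 1) - H n) / ((n : ℝ) + 1 + (0 : ℕ))) (Z 2) :=
    (hasSum_Z le_rfl).congr_fun fun n => by rw [H_succ_sub_div]; push_cast; ring
  have hE (t : ℕ) : HasSum (fun n : ℕ => (H (n + 1) - H n) / ((n : ℝ) + 1 + (t + 1 : ℕ)))
      (H (t + 1) / ((t + 1 : ℕ) : ℝ)) :=
    (hasSum_one_div_mul_add t.succ_pos).congr_fun fun n => H_succ_sub_div n (t + 1)
  have h := hasSum_div_mul_add H_zero H_nonneg
    (tendsto_div_natCast_of_le_rpow (by norm_num) H_nonneg H_le_rpow)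
    (fun t => by cases t; exacts [hE0.summable, (hE _).summable]) u.succ_pos
  rw [sum_range_succ', hE0.tsum_eq, sum_congr rfl fun t _ => (hE t).tsum_eq,
    sum_range_H_succ_div] at h
  convert h using 1
  push_cast
  ring

lemma hasSum_one_div_sq_mul_add {k : ℕ} (hk : 0 < k) :
    HasSum (fun n : ℕ => 1 / (((n : ℝ) + 1) ^ 2 * ((n : ℝ) + 1 + k))) ((Z 2 - H k / k) / k) := by
  have hk' : (k : ℝ) ≠ 0 := by positivity
  refine (((hasSum_Z le_rfl).sub (hasSum_one_div_mul_add hk)).div_const (k : ℝ)).congr_fun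
    fun n => ?_
  field_simp
  ring

lemma sq_H_succ_sub_sq_div (n t : ℕ) :
    (H (n + 1) ^ 2 - H n ^ 2) / ((n : ℝ) + 1 + t) =
      2 * (H (n + 1) / (((n : ℝ) + 1) * ((n : ℝ) + 1 + t))) -
        1 / (((n : ℝ) + 1) ^ 2 * ((n : ℝ) + 1 + t)) := by
  rw [show H n = H (n + 1) - 1 / ((n : ℝ) + 1) by rw [H_succ]; ring]
  field_simp
  ring

lemma hasSum_sq_H_succ_sub_sq_div_zero :
    HasSum (fun n : ℕ => (H (n + 1) ^ 2 - H n ^ 2) / ((n : ℝ) + 1 + (0 : ℕ))) (3 * Z 3) := by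
  rw [show 3 * Z 3 = 2 * (2 * Z 3) - Z 3 by ring]
  refine ((hasSum_H_succ_div_sq.mul_left 2).sub (hasSum_Z (by norm_num))).congr_fun fun n => ?_
  rw [sq_H_succ_sub_sq_div]
  push_cast
  ring

lemma hasSum_sq_H_succ_sub_sq_div_succ (t : ℕ) :
    HasSum (fun n : ℕ => (H (n + 1) ^ 2 - H n ^ 2) / ((n : ℝ) + 1 + (t + 1 : ℕ)))
      (Z 2 / ((t : ℝ) + 1) +
        ((H t ^ 2 + zh 2 t) / ((t : ℝ) + 1) + H (t + 1) / ((t : ℝ) + 1) ^ 2)) := by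
  rw [show Z 2 / ((t : ℝ) + 1) +
        ((H t ^ 2 + zh 2 t) / ((t : ℝ) + 1) + H (t + 1) / ((t : ℝ) + 1) ^ 2) =
      2 * ((Z 2 + (H t ^ 2 + zh 2 t) / 2) / ((t : ℝ) + 1)) -
        (Z 2 - H (t + 1) / ((t + 1 : ℕ) : ℝ)) / ((t + 1 : ℕ) : ℝ) by push_cast; field_simp; ring]
  refine (((hasSum_H_succ_div_mul_add t).mul_left 2).sub
    (hasSum_one_div_sq_mul_add (k := t + 1) (by omega))).congr_fun fun n => ?_
  exact sq_H_succ_sub_sq_div n (t + 1)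

lemma sum_range_H_sq_div_add (u : ℕ) :
    ∑ t ∈ range u, ((H t ^ 2 + zh 2 t) / ((t : ℝ) + 1) + H (t + 1) / ((t : ℝ) + 1) ^ 2) =
      (H (u + 1) ^ 3 + 3 * H (u + 1) * zh 2 (u + 1) + 2 * zh 3 (u + 1)) / 3 -
        (H (u + 1) ^ 2 + zh 2 (u + 1)) / ((u : ℝ) + 1) - ∑ i ∈ Icc 1 u, H i / (i : ℝ) ^ 2 := by
  induction u with
  | zero => norm_num [H_succ, zh_succ, H_zero, zh_zero]
  | succ u ih =>
    rw [sum_range_succ, ih, sum_Icc_succ_top (by omega), H_succ (u + 1), zh_succ 2 (u + 1),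
      zh_succ 3 (u + 1), show H u = H (u + 1) - 1 / ((u : ℝ) + 1) by rw [H_succ]; ring,
      show zh 2 u = zh 2 (u + 1) - 1 / ((u : ℝ) + 1) ^ 2 by rw [zh_succ]; ring]
    push_cast
    field_simp
    ring

theorem stmt5 (k : ℕ) (hk : 0 < k) :
    ∑' n : ℕ, H (n + 1) ^ 2 / (((n : ℝ) + 1) * ((n : ℝ) + 1 + k)) =
      (1 / (k : ℝ)) *
        (3 * Z 3 + (H k ^ 3 + 3 * H k * zh 2 k + 2 * zh 3 k) / 3 -
          (H k ^ 2 + zh 2 k) / k - ∑ i ∈ Finset.Icc 1 (k - 1), H i / (i : ℝ) ^ 2 +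
          Z 2 * H (k - 1)) := by
  obtain ⟨u, rfl⟩ : ∃ u, k = u + 1 := ⟨k - 1, by omega⟩
  have hs (t : ℕ) : Summable fun n : ℕ => (H (n + 1) ^ 2 - H n ^ 2) / ((n : ℝ) + 1 + t) := by
    cases t
    exacts [hasSum_sq_H_succ_sub_sq_div_zero.summable,
      (hasSum_sq_H_succ_sub_sq_div_succ _).summable]
  have h := hasSum_div_mul_add (f := fun n => H n ^ 2) (by simp [H_zero]) (fun n => sq_nonneg _)
    (tendsto_div_natCast_of_le_rpow (by norm_num) (fun n => sq_nonneg _) H_sq_le_rpow) hs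
    u.succ_pos
  rw [h.tsum_eq, sum_range_succ', hasSum_sq_H_succ_sub_sq_div_zero.tsum_eq,
    sum_congr rfl fun t _ => (hasSum_sq_H_succ_sub_sq_div_succ t).tsum_eq, sum_add_distrib,
    sum_range_H_sq_div_add, Nat.add_sub_cancel, H_eq_sum_range u, mul_sum]
  push_cast
  field_simp
  ring
end

section
/- For positive integers $n$ and $q \geq 2$ and real $x$ with $|x| < 1$, $\int_0^x t^{n-1}\mathrm{Li}_q(t)\,dt = \sum_{i=1}^{q-1} (-1)^{i-1}\frac{x^n}{n^i}\mathrm{Li}_{q+1-i}(x) + \frac{(-1)^q}{n^q}\ln(1-x)(x^n - 1) - \frac{(-1)^q}{n^q}\sum_{k=1}^n \frac{x^k}{k}$. -/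
/-!
Expanding `Li q` termwise,
`∫₀ˣ t^(n-1) Li_q(t) dt = ∑ₘ x^(n+m+1) / ((n+m+1) (m+1)^q)`.
The partial fraction `1/((m+1)(n+m+1)) = (1/(m+1) - 1/(n+m+1)) / n` turns this into the recursion
`I_{q+1} = x^n/n · Li_{q+1}(x) - I_q / n`, while `I_0` is a tail of the series of `-log (1 - x)`.
Unrolling the recursion gives the formula.
-/

noncomputable def Li (m : ℕ) (x : ℝ) : ℝ := ∑' n : ℕ, x ^ (n + 1) / ((n : ℝ) + 1) ^ m

open Finset Real

lemma sum_Icc_one_eq_sum_range {M : Type*} [AddCommMonoid M] (f : ℕ → M) (k : ℕ) :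
    ∑ i ∈ Icc 1 k, f i = ∑ j ∈ range k, f (j + 1) := by
  rw [← Ico_add_one_right_eq_Icc, sum_Ico_eq_sum_range, Nat.add_sub_cancel]
  simp only [add_comm]

lemma abs_pow_succ_div_le (x : ℝ) (q m : ℕ) :
    |x ^ (m + 1) / ((m : ℝ) + 1) ^ q| ≤ |x| ^ (m + 1) := by
  rw [abs_div, abs_pow, abs_pow, abs_of_pos (m.cast_add_one_pos : (0 : ℝ) < m + 1)]
  exact div_le_self (by positivity) (one_le_pow₀ (le_add_of_nonneg_left m.cast_nonneg))

lemma summable_geometric_abs_succ {x : ℝ} (hx : |x| < 1) :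
    Summable fun m : ℕ => |x| ^ (m + 1) :=
  (summable_nat_add_iff 1).2 (summable_geometric_of_lt_one (abs_nonneg x) hx)

lemma hasSum_Li {x : ℝ} (hx : |x| < 1) (q : ℕ) :
    HasSum (fun m : ℕ => x ^ (m + 1) / ((m : ℝ) + 1) ^ q) (Li q x) :=
  (Summable.of_norm_bounded (summable_geometric_abs_succ hx) (abs_pow_succ_div_le x q)).hasSum

lemma Li_one {x : ℝ} (hx : |x| < 1) : Li 1 x = -log (1 - x) :=
  (hasSum_Li hx 1).unique (by simpa using hasSum_pow_div_log_of_abs_lt_one hx)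

lemma integral_pow_mul_pow_succ_div (n q m : ℕ) (hn : n ≠ 0) (x : ℝ) :
    ∫ t in (0 : ℝ)..x, t ^ (n - 1) * (t ^ (m + 1) / ((m : ℝ) + 1) ^ q) =
      x ^ (n + m + 1) / (((n : ℝ) + m + 1) * ((m : ℝ) + 1) ^ q) := by
  have hpow : ∀ t : ℝ, t ^ (n - 1) * t ^ (m + 1) = t ^ (n + m) := fun t => by
    rw [← pow_add]; congr 1; omega
  simp only [mul_div_assoc', hpow, intervalIntegral.integral_div, integral_pow]
  rw [zero_pow (by omega), sub_zero, div_div]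
  push_cast; ring_nf

lemma hasSum_integral_pow_mul_Li (n q : ℕ) (hn : n ≠ 0) {x : ℝ} (hx : |x| < 1) :
    HasSum (fun m : ℕ => x ^ (n + m + 1) / (((n : ℝ) + m + 1) * ((m : ℝ) + 1) ^ q))
      (∫ t in (0 : ℝ)..x, t ^ (n - 1) * Li q t) := by
  have habs {t : ℝ} (ht : t ∈ Set.uIoc 0 x) : |t| ≤ |x| := by
    simpa using Set.abs_sub_left_of_mem_uIcc (Set.uIoc_subset_uIcc ht)
  simp only [← integral_pow_mul_pow_succ_div n q _ hn]
  refine intervalIntegral.hasSum_integral_of_dominated_convergence (fun m _ => |x| ^ (m + 1))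
    (fun m => by fun_prop) (fun m => .of_forall fun t ht => ?_)
    (.of_forall fun _ _ => summable_geometric_abs_succ hx) intervalIntegrable_const
    (.of_forall fun t ht => (hasSum_Li ((habs ht).trans_lt hx) q).mul_left _)
  calc ‖t ^ (n - 1) * (t ^ (m + 1) / ((m : ℝ) + 1) ^ q)‖
      ≤ 1 * |t| ^ (m + 1) := by
        rw [norm_mul, norm_pow, Real.norm_eq_abs]
        exact mul_le_mul (pow_le_one₀ (abs_nonneg t) ((habs ht).trans hx.le))
          (abs_pow_succ_div_le t q m) (abs_nonneg _) zero_le_one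
    _ ≤ |x| ^ (m + 1) := by rw [one_mul]; exact pow_le_pow_left₀ (abs_nonneg t) (habs ht) _

lemma integral_pow_mul_Li_zero (n : ℕ) (hn : n ≠ 0) {x : ℝ} (hx : |x| < 1) :
    ∫ t in (0 : ℝ)..x, t ^ (n - 1) * Li 0 t = -log (1 - x) - ∑ k ∈ Icc 1 n, x ^ k / (k : ℝ) := by
  have hlog := (hasSum_nat_add_iff' n).2 (hasSum_pow_div_log_of_abs_lt_one hx)
  rw [sum_Icc_one_eq_sum_range]
  push_cast
  refine (hasSum_integral_pow_mul_Li n 0 hn hx).unique (hlog.congr_fun fun m => ?_)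
  rw [pow_zero, mul_one, add_comm m n]
  push_cast
  ring

lemma integral_pow_mul_Li_succ (n q : ℕ) (hn : n ≠ 0) {x : ℝ} (hx : |x| < 1) :
    ∫ t in (0 : ℝ)..x, t ^ (n - 1) * Li (q + 1) t =
      x ^ n / n * Li (q + 1) x - (∫ t in (0 : ℝ)..x, t ^ (n - 1) * Li q t) / n := by
  have hn' : (n : ℝ) ≠ 0 := by exact_mod_cast hn
  refine (hasSum_integral_pow_mul_Li n (q + 1) hn hx).unique
    ((((hasSum_Li hx (q + 1)).mul_left (x ^ n / n)).sub
      ((hasSum_integral_pow_mul_Li n q hn hx).div_const n)).congr_fun fun m => ?_)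
  field_simp
  ring

lemma integral_pow_mul_Li_succ_eq (n q : ℕ) (hn : n ≠ 0) {x : ℝ} (hx : |x| < 1) :
    ∫ t in (0 : ℝ)..x, t ^ (n - 1) * Li (q + 1) t =
      ∑ i ∈ range q, (-1 : ℝ) ^ i * (x ^ n / (n : ℝ) ^ (i + 1)) * Li (q + 1 - i) x +
        (-1 : ℝ) ^ (q + 1) / (n : ℝ) ^ (q + 1) *
          (log (1 - x) * (x ^ n - 1) - ∑ k ∈ Icc 1 n, x ^ k / (k : ℝ)) := by
  have hn' : (n : ℝ) ≠ 0 := by exact_mod_cast hn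
  induction q with
  | zero =>
    rw [integral_pow_mul_Li_succ n 0 hn hx, integral_pow_mul_Li_zero n hn hx, Li_one hx]
    field_simp
    ring
  | succ q ih =>
    rw [integral_pow_mul_Li_succ n (q + 1) hn hx, ih, sum_range_succ']
    simp only [Nat.add_sub_add_right, Nat.sub_zero]
    have hshift : ∑ i ∈ range q, (-1 : ℝ) ^ (i + 1) * (x ^ n / (n : ℝ) ^ (i + 1 + 1)) *
        Li (q + 1 - i) x =
          -(∑ i ∈ range q, (-1 : ℝ) ^ i * (x ^ n / (n : ℝ) ^ (i + 1)) * Li (q + 1 - i) x) / n := by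
      rw [neg_div, sum_div, ← sum_neg_distrib]
      refine sum_congr rfl fun i _ => ?_
      field_simp
      ring
    rw [hshift]
    field_simp
    ring

theorem stmt9 (n q : ℕ) (hn : 1 ≤ n) (hq : 2 ≤ q) (x : ℝ) (hx : |x| < 1) :
    ∫ t in (0 : ℝ)..x, t ^ (n - 1) * Li q t =
      ∑ i ∈ Finset.Icc 1 (q - 1), (-1 : ℝ) ^ (i - 1) * (x ^ n / (n : ℝ) ^ i) * Li (q + 1 - i) x +
        (-1 : ℝ) ^ q / (n : ℝ) ^ q * Real.log (1 - x) * (x ^ n - 1) -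
        (-1 : ℝ) ^ q / (n : ℝ) ^ q * ∑ k ∈ Finset.Icc 1 n, x ^ k / (k : ℝ) := by
  obtain ⟨p, rfl⟩ : ∃ p, q = p + 1 := ⟨q - 1, by omega⟩
  rw [integral_pow_mul_Li_succ_eq n p (by omega) hx, Nat.add_sub_cancel,
    sum_Icc_one_eq_sum_range _ p]
  simp only [Nat.add_sub_add_right, Nat.add_sub_cancel]
  ring
end
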